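/- Let i be even and k = (i−2)/2. For all n ≥ 0, the displacement vector of the path coded by q_{3n+1}^[i] (under unit steps 0=(1,0), 1=(0,1), 2=(−1,0), 3=(0,−1)) equals (P^[k](n+1) + P^[k](n), 0). -/
import Mathlib


/-- The letter morphism bar: 0↦0, 1↦3, 2↦2, 3↦1. -/
def bar (a : ℕ) : ℕ := if a = 1 then 3 else if a = 3 then 1 else a

/-- The words q_n^[i] for even i. -/
def qEven (i : ℕ) : ℕ → List ℕ
  | 0 => []
  | 1 => [1]
  | 2 => (List.replicate (i / 2) [1, 3]).flatten
  | n + 3 =>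
      if (n + 3) % 3 = 1 then qEven i (n + 2) ++ qEven i (n + 1)
      else qEven i (n + 2) ++ (qEven i (n + 1)).map bar

/-- Unit steps: 0 = (1,0), 1 = (0,1), 2 = (-1,0), 3 = (0,-1) (direction taken mod 4). -/
def step (d : ℕ) : ℤ × ℤ :=
  if d % 4 = 0 then (1, 0) else if d % 4 = 1 then (0, 1)
  else if d % 4 = 2 then (-1, 0) else (0, -1)

/-- The displacement of the path Σ°₀(w): starting with direction 0, each letter of w is a
turn; the path consists of the unit steps in the successive prefix-sum directions
(the j-th step is in direction w_1 + ⋯ + w_j mod 4). -/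
def pathDisp (w : List ℕ) : ℤ × ℤ :=
  (w.foldl (fun (st : ℕ × (ℤ × ℤ)) a => (st.1 + a, st.2 + step st.1)) (0, (0, 0))).2

/-- Generalized Pell numbers. -/
def genPell (k : ℕ) : ℕ → ℤ
  | 0 => -(k : ℤ)
  | 1 => (k : ℤ) + 1
  | n + 2 => 2 * genPell k (n + 1) + genPell k n

namespace StmtAux

def f (st : ℕ × (ℤ × ℤ)) (a : ℕ) : ℕ × (ℤ × ℤ) := (st.1 + a, st.2 + step st.1)

def disp (d : ℕ) (w : List ℕ) : ℤ × ℤ := (w.foldl f (d, (0, 0))).2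

lemma pathDisp_eq (w : List ℕ) : pathDisp w = disp 0 w := rfl

lemma zz : ((0, 0) : ℤ × ℤ) = 0 := rfl

lemma disp_nil (d : ℕ) : disp d [] = (0, 0) := rfl

lemma foldl_snd (w : List ℕ) : ∀ d : ℕ, ∀ p : ℤ × ℤ,
    (w.foldl f (d, p)).2 = p + disp d w := by
  induction w with
  | nil => intro d p; simp [disp, f]
  | cons a w ih =>
    intro d p
    show (w.foldl f (d + a, p + step d)).2 = p + disp d (a :: w)
    rw [ih]
    have : disp d (a :: w) = step d + disp (d + a) w := by
      show (w.foldl f (d + a, (0, 0) + step d)).2 = _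
      rw [ih, zz]; abel
    rw [this]; abel

lemma disp_cons (d a : ℕ) (w : List ℕ) :
    disp d (a :: w) = step d + disp (d + a) w := by
  show (w.foldl f (d + a, (0, 0) + step d)).2 = _
  rw [foldl_snd, zz]; abel

lemma foldl_fst (w : List ℕ) : ∀ d : ℕ, ∀ p : ℤ × ℤ,
    (w.foldl f (d, p)).1 = d + w.sum := by
  induction w with
  | nil => intro d p; simp [f]
  | cons a w ih =>
    intro d p
    show (w.foldl f (d + a, p + step d)).1 = _
    rw [ih]; simp; ring

lemma disp_append (d : ℕ) (u v : List ℕ) :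
    disp d (u ++ v) = disp d u + disp (d + u.sum) v := by
  show ((u ++ v).foldl f (d, (0, 0))).2 = _
  rw [List.foldl_append]
  have h1 : u.foldl f (d, (0, 0)) = (d + u.sum, disp d u) := by
    have := foldl_fst u d (0, 0)
    have h2 := foldl_snd u d (0, 0)
    rw [Prod.ext_iff]
    constructor
    · exact this
    · rw [h2, zz, zero_add]
  rw [h1, foldl_snd]

lemma step_mod {d e : ℕ} (h : d % 4 = e % 4) : step d = step e := by
  unfold step; rw [h]

lemma disp_mod (w : List ℕ) : ∀ d e : ℕ, d % 4 = e % 4 → disp d w = disp e w := by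
  induction w with
  | nil => intro d e _; rfl
  | cons a w ih =>
    intro d e h
    rw [disp_cons, disp_cons, step_mod h, ih (d + a) (e + a) (by omega)]

def rot (p : ℤ × ℤ) : ℤ × ℤ := (-p.2, p.1)

def conj (p : ℤ × ℤ) : ℤ × ℤ := (p.1, -p.2)

lemma rot_add (p q : ℤ × ℤ) : rot (p + q) = rot p + rot q := by
  rw [Prod.ext_iff]; constructor <;> simp [rot] <;> ring

lemma conj_add (p q : ℤ × ℤ) : conj (p + q) = conj p + conj q := by
  rw [Prod.ext_iff]
  constructor <;> simp [conj] <;> ring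

lemma step_succ (d : ℕ) : step (d + 1) = rot (step d) := by
  have h : d % 4 = 0 ∨ d % 4 = 1 ∨ d % 4 = 2 ∨ d % 4 = 3 := by omega
  rcases h with h | h | h | h <;>
    · have h' : (d + 1) % 4 = (d % 4 + 1) % 4 := by omega
      simp [step, h, h', rot]

lemma disp_succ (w : List ℕ) : ∀ d : ℕ, disp (d + 1) w = rot (disp d w) := by
  induction w with
  | nil => intro d; rfl
  | cons a w ih =>
    intro d
    rw [disp_cons, disp_cons, step_succ]
    have : d + 1 + a = (d + a) + 1 := by ring
    rw [this, ih (d + a), rot_add]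

lemma step_conj {d e : ℕ} (h : (d + e) % 4 = 0) : step d = conj (step e) := by
  have h4 : e % 4 = 0 ∨ e % 4 = 1 ∨ e % 4 = 2 ∨ e % 4 = 3 := by omega
  rcases h4 with h4 | h4 | h4 | h4 <;>
    · have hd : d % 4 = (4 - e % 4) % 4 := by omega
      simp [step, h4, hd, conj]

lemma disp_bar (w : List ℕ) : (∀ a ∈ w, a = 1 ∨ a = 3) → ∀ d e : ℕ,
    (d + e) % 4 = 0 → disp d (w.map bar) = conj (disp e w) := by
  induction w with
  | nil => intro _ d e _; rfl
  | cons a w ih =>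
    intro hmem d e h
    have ha : a = 1 ∨ a = 3 := hmem a (by simp)
    have hw : ∀ b ∈ w, b = 1 ∨ b = 3 := fun b hb => hmem b (by simp [hb])
    show disp d (bar a :: w.map bar) = conj (disp e (a :: w))
    rw [disp_cons, disp_cons, conj_add, ← step_conj h]
    have hbar : bar a + a = 4 := by rcases ha with ha | ha <;> simp [ha, bar]
    rw [ih hw (d + bar a) (e + a) (by omega)]

lemma sum_map_bar (w : List ℕ) (h : ∀ a ∈ w, a = 1 ∨ a = 3) :
    (w.map bar).sum + w.sum = 4 * w.length := by
  induction w with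
  | nil => simp
  | cons a w ih =>
    have ha : a = 1 ∨ a = 3 := h a (by simp)
    have hw := ih (fun b hb => h b (by simp [hb]))
    have hbar : bar a + a = 4 := by rcases ha with ha | ha <;> simp [ha, bar]
    simp only [List.map_cons, List.sum_cons, List.length_cons]
    omega

theorem mem_qEven (i : ℕ) : ∀ n, ∀ a ∈ qEven i n, a = 1 ∨ a = 3
  | 0 => by simp [qEven]
  | 1 => by simp [qEven]
  | 2 => by
    intro a ha
    rw [qEven, List.mem_flatten] at ha
    obtain ⟨l, hl, hal⟩ := ha
    rw [List.eq_of_mem_replicate hl] at hal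
    simpa using hal
  | n + 3 => by
    intro a ha
    rw [qEven] at ha
    split at ha <;> rw [List.mem_append] at ha
    · rcases ha with ha | ha
      · exact mem_qEven i (n + 2) a ha
      · exact mem_qEven i (n + 1) a ha
    · rcases ha with ha | ha
      · exact mem_qEven i (n + 2) a ha
      · rw [List.mem_map] at ha
        obtain ⟨b, hb, hba⟩ := ha
        rcases mem_qEven i (n + 1) b hb with h | h <;>
          · subst hba; simp [h, bar]

lemma sum_rep (m : ℕ) : ((List.replicate m [1, 3]).flatten).sum = 4 * m := by
  induction m with
  | zero => simp
  | succ m ih =>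
    rw [List.replicate_succ, List.flatten_cons, List.sum_append, ih]
    simp; ring

lemma disp_rep (m : ℕ) :
    disp 0 ((List.replicate m [1, 3]).flatten) = ((m : ℤ), (m : ℤ)) := by
  induction m with
  | zero => rfl
  | succ m ih =>
    rw [List.replicate_succ, List.flatten_cons, disp_append]
    have h13 : disp 0 [1, 3] = (1, 1) := by
      rw [disp_cons, disp_cons, disp_nil]
      simp [step]
    have hsum : (0 : ℕ) + ([1, 3] : List ℕ).sum = 4 := by simp
    rw [h13, hsum, disp_mod _ 4 0 (by norm_num), ih, Prod.ext_iff]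
    simp only [Prod.mk_add_mk, Prod.fst, Prod.snd]
    push_cast; constructor <;> ring

lemma disp_one (w : List ℕ) : disp 1 w = rot (disp 0 w) := disp_succ w 0

lemma disp_three (w : List ℕ) : disp 3 w = rot (rot (rot (disp 0 w))) := by
  rw [show (3 : ℕ) = 2 + 1 from rfl, disp_succ, show (2 : ℕ) = 1 + 1 from rfl,
    disp_succ, disp_one]

lemma genPell_two (k n : ℕ) :
    genPell k (n + 2) = 2 * genPell k (n + 1) + genPell k n := rfl

lemma key (i k : ℕ) (hik : i = 2 * k + 2) (n : ℕ) :
    (qEven i (3 * n + 1)).sum % 4 = (if n % 2 = 0 then 1 else 3) ∧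
    (qEven i (3 * n + 2)).sum % 4 = 0 ∧
    disp 0 (qEven i (3 * n + 1)) = (genPell k (n + 1) + genPell k n, 0) ∧
    disp 0 (qEven i (3 * n + 2)) =
      (genPell k (n + 1), (if n % 2 = 0 then 1 else -1) * genPell k (n + 1)) := by
  induction n with
  | zero =>
    have h2 : qEven i 2 = (List.replicate (k + 1) [1, 3]).flatten := by
      rw [qEven, show i / 2 = k + 1 by omega]
    refine ⟨by simp [qEven], ?_, ?_, ?_⟩
    · show (qEven i 2).sum % 4 = 0
      rw [h2, sum_rep]; omega
    · show disp 0 (qEven i 1) = _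
      rw [show qEven i 1 = [1] from rfl, disp_cons, disp_nil, Prod.ext_iff]
      simp only [step, genPell]
      norm_num
    · show disp 0 (qEven i 2) = _
      rw [h2, disp_rep, Prod.ext_iff]
      simp only [genPell]
      push_cast; constructor <;> norm_num
  | succ n ih =>
    obtain ⟨hs1, hs2, hd1, hd2⟩ := ih
    set q1 := qEven i (3 * n + 1) with hq1
    set q2 := qEven i (3 * n + 2) with hq2
    -- recurrences
    have e3 : qEven i (3 * n + 3) = q2 ++ q1.map bar := by
      rw [show 3 * n + 3 = (3 * n) + 3 from rfl, qEven, if_neg (by omega)]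
    have e4 : qEven i (3 * n + 4) = qEven i (3 * n + 3) ++ q2 := by
      rw [show 3 * n + 4 = (3 * n + 1) + 3 from by ring, qEven, if_pos (by omega)]
    have e5 : qEven i (3 * n + 5) = qEven i (3 * n + 4) ++ (qEven i (3 * n + 3)).map bar := by
      rw [show 3 * n + 5 = (3 * n + 2) + 3 from by ring, qEven, if_neg (by omega)]
    have hm1 : ∀ a ∈ q1, a = 1 ∨ a = 3 := mem_qEven i (3 * n + 1)
    have hm3 : ∀ a ∈ qEven i (3 * n + 3), a = 1 ∨ a = 3 := mem_qEven i (3 * n + 3)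
    -- sums
    have hb1 := sum_map_bar q1 hm1
    have hb3 := sum_map_bar (qEven i (3 * n + 3)) hm3
    have hs3 : (qEven i (3 * n + 3)).sum = q2.sum + (q1.map bar).sum := by
      rw [e3, List.sum_append]
    have hs4 : (qEven i (3 * n + 4)).sum = (qEven i (3 * n + 3)).sum + q2.sum := by
      rw [e4, List.sum_append]
    have hs5 : (qEven i (3 * n + 5)).sum =
        (qEven i (3 * n + 4)).sum + ((qEven i (3 * n + 3)).map bar).sum := by
      rw [e5, List.sum_append]
    have hind1 : 3 * (n + 1) + 1 = 3 * n + 4 := by ring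
    have hind2 : 3 * (n + 1) + 2 = 3 * n + 5 := by ring
    -- abbreviations
    set A := genPell k (n + 1) + genPell k n with hA
    set B := genPell k (n + 1) with hB
    have hgp1 : genPell k (n + 1 + 1) + genPell k (n + 1) = A + 2 * B := by
      rw [show n + 1 + 1 = n + 2 from rfl, genPell_two]; rw [hA, hB]; ring
    have hgp2 : genPell k (n + 1 + 1) = A + B := by
      rw [show n + 1 + 1 = n + 2 from rfl, genPell_two]; rw [hA, hB]; ring
    rcases (show n % 2 = 0 ∨ n % 2 = 1 by omega) with hn | hn
    · -- n even : σ = 1, ε = 1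
      rw [if_pos hn] at hs1 hd2
      have hσ : q1.sum % 4 = 1 := hs1
      -- D3
      have hD3 : disp 0 (qEven i (3 * n + 3)) = (B + A, B) := by
        rw [e3, disp_append, disp_bar q1 hm1 (0 + q2.sum) 0 (by omega), hd1, hd2]
        rw [Prod.ext_iff]; constructor <;> simp [conj] <;> ring
      have hs3' : (qEven i (3 * n + 3)).sum % 4 = 3 := by omega
      -- D4
      have hD4 : disp 0 (qEven i (3 * n + 4)) = (A + 2 * B, 0) := by
        rw [e4, disp_append, zero_add,
          disp_mod q2 (qEven i (3 * n + 3)).sum 3 (by omega), disp_three, hd2, hD3]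
        rw [Prod.ext_iff]; constructor <;> simp [rot] <;> ring
      have hs4' : (qEven i (3 * n + 4)).sum % 4 = 3 := by omega
      -- D5
      have hD5 : disp 0 (qEven i (3 * n + 5)) = (A + B, -(A + B)) := by
        rw [e5, disp_append, zero_add,
          disp_bar (qEven i (3 * n + 3)) hm3 ((qEven i (3 * n + 4)).sum) 1 (by omega),
          disp_one, hD3, hD4]
        rw [Prod.ext_iff]; constructor <;> simp [conj, rot] <;> ring
      refine ⟨?_, ?_, ?_, ?_⟩
      · rw [if_neg (by omega), hind1]; exact hs4'
      · rw [hind2]; omega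
      · rw [hind1, hD4, hgp1]
      · rw [hind2, hD5, if_neg (by omega), hgp2]
        simp [Prod.ext_iff]
    · -- n odd : σ = 3, ε = -1
      rw [if_neg (by omega)] at hs1 hd2
      have hσ : q1.sum % 4 = 3 := hs1
      have hD3 : disp 0 (qEven i (3 * n + 3)) = (B + A, -B) := by
        rw [e3, disp_append, disp_bar q1 hm1 (0 + q2.sum) 0 (by omega), hd1, hd2]
        rw [Prod.ext_iff]; constructor <;> simp [conj] <;> ring
      have hs3' : (qEven i (3 * n + 3)).sum % 4 = 1 := by omega
      have hD4 : disp 0 (qEven i (3 * n + 4)) = (A + 2 * B, 0) := by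
        rw [e4, disp_append, zero_add,
          disp_mod q2 (qEven i (3 * n + 3)).sum 1 (by omega), disp_one, hd2, hD3]
        rw [Prod.ext_iff]; constructor <;> simp [rot] <;> ring
      have hs4' : (qEven i (3 * n + 4)).sum % 4 = 1 := by omega
      have hD5 : disp 0 (qEven i (3 * n + 5)) = (A + B, A + B) := by
        rw [e5, disp_append, zero_add,
          disp_bar (qEven i (3 * n + 3)) hm3 ((qEven i (3 * n + 4)).sum) 3 (by omega),
          disp_three, hD3, hD4]
        rw [Prod.ext_iff]; constructor <;> simp [conj, rot] <;> ring
      refine ⟨?_, ?_, ?_, ?_⟩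
      · rw [if_pos (by omega), hind1]; exact hs4'
      · rw [hind2]; omega
      · rw [hind1, hD4, hgp1]
      · rw [hind2, hD5, if_pos (by omega), hgp2]
        simp [Prod.ext_iff]

end StmtAux

theorem stmt_16 (i k : ℕ) (hik : i = 2 * k + 2) (n : ℕ) :
    pathDisp (qEven i (3 * n + 1)) = (genPell k (n + 1) + genPell k n, 0) := by
  rw [StmtAux.pathDisp_eq]
  exact (StmtAux.key i k hik n).2.2.1
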